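/- Let S and T be positive definite symmetric n×n matrices with S ⪯ T. Then tr(S^{1/2}(T^{-1/2} − S^{-1/2})) ≤ 0. -/

import Mathlib

open Matrix
open scoped Classical

/-- The positive semidefinite square root of a matrix (zero if not PSD). -/
noncomputable def sqrtM {n : ℕ} (A : Matrix (Fin n) (Fin n) ℝ) : Matrix (Fin n) (Fin n) ℝ :=
  if h : A.PosSemidef then
    (h.1.eigenvectorUnitary : Matrix (Fin n) (Fin n) ℝ) * diagonal (Real.sqrt ∘ h.1.eigenvalues) *
      (star h.1.eigenvectorUnitary : Matrix (Fin n) (Fin n) ℝ)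
  else 0

/-- Euclidean norm of a vector. -/
noncomputable def euclNorm {n : ℕ} (v : Fin n → ℝ) : ℝ := Real.sqrt (v ⬝ᵥ v)

/-- The ℓ₂ operator (spectral) norm of a matrix. -/
noncomputable def opNorm {n : ℕ} (A : Matrix (Fin n) (Fin n) ℝ) : ℝ :=
  ⨆ u : {u : Fin n → ℝ // euclNorm u ≤ 1}, euclNorm (A *ᵥ u)

/-! With `A = √S`, `B = √T` and `M = A B⁻¹`, the trace in question is `tr M - n`. Conjugating
`S ⪯ T = B²` by `B⁻¹` gives `MᵀM = B⁻¹ S B⁻¹ ⪯ 1`, so every diagonal entry satisfies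
`M i i ^ 2 ≤ (MᵀM) i i ≤ 1`, whence `tr M ≤ n`. -/

lemma sqrtM_eq_cfc {n : ℕ} {A : Matrix (Fin n) (Fin n) ℝ} (hA : A.PosSemidef) :
    sqrtM A = cfc Real.sqrt A := by
  rw [sqrtM, dif_pos hA, hA.1.cfc_eq, IsHermitian.cfc, Unitary.conjStarAlgAut_apply]
  rfl

lemma sqrtM_mul_self {n : ℕ} {A : Matrix (Fin n) (Fin n) ℝ} (hA : A.PosSemidef) :
    sqrtM A * sqrtM A = A := by
  rw [sqrtM_eq_cfc hA, ← cfc_mul Real.sqrt Real.sqrt A]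
  conv_rhs => rw [← cfc_id' ℝ A hA.1]
  refine cfc_congr fun x hx => ?_
  rw [hA.1.spectrum_real_eq_range_eigenvalues] at hx
  obtain ⟨i, rfl⟩ := hx
  exact Real.mul_self_sqrt (hA.eigenvalues_nonneg i)

lemma transpose_sqrtM {n : ℕ} (A : Matrix (Fin n) (Fin n) ℝ) : (sqrtM A)ᵀ = sqrtM A := by
  by_cases hA : A.PosSemidef
  · rw [sqrtM_eq_cfc hA, ← conjTranspose_eq_transpose_of_trivial]
    exact cfc_predicate Real.sqrt A
  · simp [sqrtM, hA]

lemma isUnit_det_sqrtM {n : ℕ} {A : Matrix (Fin n) (Fin n) ℝ} (hA : A.PosDef) :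
    IsUnit (sqrtM A).det := by
  refine isUnit_iff_ne_zero.mpr fun h => hA.det_pos.ne' ?_
  rw [← sqrtM_mul_self hA.posSemidef, det_mul, h, zero_mul]

lemma sq_diag_le_transpose_mul_self_diag {ι R : Type*} [Fintype ι] [CommRing R] [LinearOrder R]
    [IsStrictOrderedRing R] (M : Matrix ι ι R) (i : ι) : M i i ^ 2 ≤ (Mᵀ * M) i i := by
  rw [mul_apply]
  simp_rw [transpose_apply, ← sq]
  exact Finset.single_le_sum (f := fun k => M k i ^ 2) (fun k _ => sq_nonneg _)
    (Finset.mem_univ i)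

lemma trace_le_card_of_posSemidef_one_sub_transpose_mul_self {ι : Type*} [Fintype ι]
    [DecidableEq ι] {M : Matrix ι ι ℝ} (h : (1 - Mᵀ * M).PosSemidef) :
    M.trace ≤ Fintype.card ι := by
  have hdiag (i : ι) : M i i ≤ 1 := by
    have h1 : (Mᵀ * M) i i ≤ 1 := by simpa using h.diag_nonneg (i := i)
    exact (abs_le.mp ((sq_le_one_iff_abs_le_one _).mp
      ((sq_diag_le_transpose_mul_self_diag M i).trans h1))).2
  calc M.trace = ∑ i, M i i := rfl
    _ ≤ ∑ _i : ι, (1 : ℝ) := Finset.sum_le_sum fun i _ => hdiag i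
    _ = Fintype.card ι := by simp

lemma posSemidef_one_sub_inv_mul_mul_inv {ι : Type*} [Fintype ι] [DecidableEq ι]
    {B S : Matrix ι ι ℝ} (hB : Bᵀ = B) (hdet : IsUnit B.det) (h : (B * B - S).PosSemidef) :
    (1 - B⁻¹ * S * B⁻¹).PosSemidef := by
  have := h.mul_mul_conjTranspose_same B⁻¹
  rwa [conjTranspose_eq_transpose_of_trivial, transpose_nonsing_inv, hB, Matrix.mul_sub,
    Matrix.sub_mul, ← Matrix.mul_assoc, nonsing_inv_mul B hdet, Matrix.one_mul,
    mul_nonsing_inv B hdet] at this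

theorem trace_sqrt_mul_invsqrt_diff_nonpos {n : ℕ} {S T : Matrix (Fin n) (Fin n) ℝ}
    (hS : S.PosDef) (hT : T.PosDef) (hST : (T - S).PosSemidef) :
    (sqrtM S * ((sqrtM T)⁻¹ - (sqrtM S)⁻¹)).trace ≤ 0 := by
  set A := sqrtM S
  set B := sqrtM T
  have hM : (A * B⁻¹)ᵀ * (A * B⁻¹) = B⁻¹ * S * B⁻¹ := by
    rw [transpose_mul, transpose_nonsing_inv, transpose_sqrtM, transpose_sqrtM, Matrix.mul_assoc,
      ← Matrix.mul_assoc A, sqrtM_mul_self hS.posSemidef, ← Matrix.mul_assoc]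
  have hcontr : (1 - (A * B⁻¹)ᵀ * (A * B⁻¹)).PosSemidef := by
    rw [hM]
    exact posSemidef_one_sub_inv_mul_mul_inv (transpose_sqrtM T) (isUnit_det_sqrtM hT)
      (by rwa [sqrtM_mul_self hT.posSemidef])
  have hle := trace_le_card_of_posSemidef_one_sub_transpose_mul_self hcontr
  rw [Matrix.mul_sub, trace_sub, mul_nonsing_inv A (isUnit_det_sqrtM hS), trace_one]
  exact sub_nonpos.mpr hle
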